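/- arXiv:2605.23782 — 7 statements merged into one kernel-verified Lean document; each statement's English description precedes it below -/
import Mathlib

section
/- Let (x^H, x^A) be a feasible path flow pattern with aggregated link flow f = Δ(x^H + x^A), and assume each t_a is continuously differentiable. Then the following are equivalent: (i) for every pair of paths p, q ∈ 𝓟: if x_p^H > 0 then C_q^H(f) ≥ C_p^H(f), and if x_p^A > 0 then the right-hand derivative at ε = 0 of the map ε ↦ S(Δ(x^H + x^A + ε(e_q − e_p))) is nonnegative (here e_p, e_q are the standard basis vectors of ℝ^𝓟); (ii) there exist λ^H, λ^A ∈ ℝ such that for every path p ∈ 𝓟, C_p^H(f) ≥ λ^H with equality whenever x_p^H > 0, and C_p^A(f) ≥ λ^A with equality whenever x_p^A > 0. -/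
open scoped BigOperators

/-- Aggregated link flow `f = Δ x`. -/
noncomputable def aggFlow {L P : Type*} [Fintype P] (Δ : L → P → ℝ) (x : P → ℝ) : L → ℝ :=
  fun a => ∑ p, Δ a p * x p

/-- Human path cost `C_p^H(f) = Σ_a Δ_{ap} t_a(f_a)`. -/
noncomputable def CH {L P : Type*} [Fintype L] (Δ : L → P → ℝ) (t : L → ℝ → ℝ)
    (f : L → ℝ) (p : P) : ℝ :=
  ∑ a, Δ a p * t a (f a)

/-- Autonomous (marginal social) path cost
`C_p^A(f) = Σ_a Δ_{ap} (t_a(f_a) + f_a t_a'(f_a))`. -/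
noncomputable def CA {L P : Type*} [Fintype L] (Δ : L → P → ℝ) (t : L → ℝ → ℝ)
    (f : L → ℝ) (p : P) : ℝ :=
  ∑ a, Δ a p * (t a (f a) + f a * deriv (t a) (f a))

/-- Social cost `S(f) = Σ_a f_a t_a(f_a)`. -/
noncomputable def Scost {L : Type*} [Fintype L] (t : L → ℝ → ℝ) (f : L → ℝ) : ℝ :=
  ∑ a, f a * t a (f a)

/-
Swapping mass ε from path p to path q moves every link flow along the line f + ε (Δ_q - Δ_p),
so the right derivative of the social cost at ε = 0 is the two-sided one, C_q^A(f) - C_p^A(f).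
Both families of deviation conditions then say that a cost vector c is minimal on the support of
the corresponding flow, which for finitely many paths is the same as the existence of a level λ
bounding c from below and attained on the support.
-/

open Finset

theorem forall_imp_le_iff_exists_lowerBound_eq {P α : Type*} [Finite P] [SemilatticeInf α]
    [Nonempty α] (c : P → α) (s : P → Prop) :
    (∀ p q, s p → c p ≤ c q) ↔ ∃ m, ∀ p, m ≤ c p ∧ (s p → c p = m) := by
  constructor
  · intro h
    by_cases hs : ∃ p, s p
    · obtain ⟨p₀, hp₀⟩ := hs
      exact ⟨c p₀, fun p => ⟨h p₀ p hp₀, fun hp => le_antisymm (h p p₀ hp) (h p₀ p hp₀)⟩⟩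
    · push Not at hs
      obtain ⟨m, hm⟩ := (Set.finite_range c).bddBelow
      exact ⟨m, fun p => ⟨hm ⟨p, rfl⟩, fun hp => absurd hp (hs p)⟩⟩
  · rintro ⟨m, hm⟩ p q hp
    exact ((hm p).2 hp).trans_le (hm q).1

theorem aggFlow_add_mul_swap {L P : Type*} [Fintype P] [DecidableEq P] (Δ : L → P → ℝ)
    (x : P → ℝ) (p q : P) (ε : ℝ) (a : L) :
    aggFlow Δ (fun r => x r + ε * ((Pi.single q 1 : P → ℝ) r - (Pi.single p 1 : P → ℝ) r)) a =
      aggFlow Δ x a + ε * (Δ a q - Δ a p) := by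
  simp only [aggFlow, mul_add, sum_add_distrib, mul_sub, sum_sub_distrib, Pi.single_apply,
    mul_ite, mul_one, mul_zero, sum_ite_eq', mem_univ, if_true]
  ring

theorem hasDerivAt_Scost_line {L : Type*} [Fintype L] (t : L → ℝ → ℝ) (f d : L → ℝ)
    (ht : ∀ a, DifferentiableAt ℝ (t a) (f a)) :
    HasDerivAt (fun ε : ℝ => Scost t (fun a => f a + ε * d a))
      (∑ a, d a * (t a (f a) + f a * deriv (t a) (f a))) 0 := by
  refine HasDerivAt.fun_sum fun a _ => ?_
  have hline : HasDerivAt (fun ε : ℝ => f a + ε * d a) (d a) 0 := by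
    simpa using (hasDerivAt_mul_const (d a) (x := (0:ℝ))).const_add (f a)
  have ht' : HasDerivAt (t a) (deriv (t a) (f a)) (f a) := (ht a).hasDerivAt
  refine (hline.mul (ht'.comp_of_eq 0 hline (by simp))).congr_deriv ?_
  simp only [Function.comp_apply, zero_mul, add_zero]
  ring

theorem derivWithin_Scost_swap {L P : Type*} [Fintype L] [Fintype P] [DecidableEq P]
    (Δ : L → P → ℝ) (t : L → ℝ → ℝ) (x : P → ℝ)
    (ht : ∀ a, DifferentiableAt ℝ (t a) (aggFlow Δ x a)) (p q : P) :
    derivWithin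
        (fun ε : ℝ => Scost t (aggFlow Δ
          (fun r => x r + ε * ((Pi.single q 1 : P → ℝ) r - (Pi.single p 1 : P → ℝ) r))))
        (Set.Ici 0) 0 =
      CA Δ t (aggFlow Δ x) q - CA Δ t (aggFlow Δ x) p := by
  have hflow : ∀ ε : ℝ, aggFlow Δ
      (fun r => x r + ε * ((Pi.single q 1 : P → ℝ) r - (Pi.single p 1 : P → ℝ) r)) =
        fun a => aggFlow Δ x a + ε * (Δ a q - Δ a p) :=
    fun ε => funext (aggFlow_add_mul_swap Δ x p q ε)
  simp only [hflow]
  rw [(hasDerivAt_Scost_line t _ _ ht).hasDerivWithinAt.derivWithin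
    (uniqueDiffOn_Ici 0 0 Set.self_mem_Ici), CA, CA, ← sum_sub_distrib]
  exact sum_congr rfl fun a _ => by ring

theorem deviation_iff_wardrop_general {L P : Type*} [Fintype L] [Fintype P]
    [DecidableEq P]
    (Δ : L → P → ℝ)
    (t : L → ℝ → ℝ) (ht : ∀ a, ContDiff ℝ 1 (t a))
    (xH xA : P → ℝ) :
    (∀ p q : P,
        (0 < xH p →
          CH Δ t (aggFlow Δ (fun r => xH r + xA r)) p ≤
            CH Δ t (aggFlow Δ (fun r => xH r + xA r)) q) ∧
        (0 < xA p →
          0 ≤ derivWithin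
            (fun ε : ℝ => Scost t (aggFlow Δ
              (fun r => xH r + xA r +
                ε * ((Pi.single q 1 : P → ℝ) r - (Pi.single p 1 : P → ℝ) r))))
            (Set.Ici (0:ℝ)) 0)) ↔
    (∃ lamH lamA : ℝ, ∀ p : P,
        (lamH ≤ CH Δ t (aggFlow Δ (fun r => xH r + xA r)) p ∧
          (0 < xH p → CH Δ t (aggFlow Δ (fun r => xH r + xA r)) p = lamH)) ∧
        (lamA ≤ CA Δ t (aggFlow Δ (fun r => xH r + xA r)) p ∧
          (0 < xA p → CA Δ t (aggFlow Δ (fun r => xH r + xA r)) p = lamA))) := by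
  have hdiff : ∀ a, DifferentiableAt ℝ (t a) (aggFlow Δ (fun r => xH r + xA r) a) :=
    fun a => ((ht a).differentiable one_ne_zero) _
  simp only [derivWithin_Scost_swap Δ t (fun r => xH r + xA r) hdiff, sub_nonneg, forall_and,
    exists_and_left, exists_and_right, forall_imp_le_iff_exists_lowerBound_eq]

/-- Theorem 1: for a feasible path flow pattern `(x^H, x^A)` with aggregated
link flow `f = Δ(x^H + x^A)`, the local-deviation equilibrium conditions (for
human agents in terms of travel times, and for autonomous agents in terms of the
right-hand derivative of the social cost along a swap of flow from path `p` to
path `q`) are equivalent to the Wardrop-like conditions with multipliers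
`λ^H, λ^A`. -/
theorem deviation_iff_wardrop {L P : Type*} [Fintype L] [Fintype P] [Nonempty P]
    [DecidableEq P]
    (Δ : L → P → ℝ) (hΔ : ∀ a p, Δ a p = 0 ∨ Δ a p = 1)
    (t : L → ℝ → ℝ) (ht : ∀ a, ContDiff ℝ 1 (t a))
    (α : ℝ) (hα : α ∈ Set.Icc (0:ℝ) 1)
    (xH xA : P → ℝ) (hxH : ∀ p, 0 ≤ xH p) (hxA : ∀ p, 0 ≤ xA p)
    (hdemH : ∑ p, xH p = 1 - α) (hdemA : ∑ p, xA p = α) :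
    (∀ p q : P,
        (0 < xH p →
          CH Δ t (aggFlow Δ (fun r => xH r + xA r)) p ≤
            CH Δ t (aggFlow Δ (fun r => xH r + xA r)) q) ∧
        (0 < xA p →
          0 ≤ derivWithin
            (fun ε : ℝ => Scost t (aggFlow Δ
              (fun r => xH r + xA r +
                ε * ((Pi.single q 1 : P → ℝ) r - (Pi.single p 1 : P → ℝ) r))))
            (Set.Ici (0:ℝ)) 0)) ↔
    (∃ lamH lamA : ℝ, ∀ p : P,
        (lamH ≤ CH Δ t (aggFlow Δ (fun r => xH r + xA r)) p ∧
          (0 < xH p → CH Δ t (aggFlow Δ (fun r => xH r + xA r)) p = lamH)) ∧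
        (lamA ≤ CA Δ t (aggFlow Δ (fun r => xH r + xA r)) p ∧
          (0 < xA p → CA Δ t (aggFlow Δ (fun r => xH r + xA r)) p = lamA))) :=
  deviation_iff_wardrop_general Δ t ht xH xA
end

section
/- Under the BPR assumption, the aggregated link flow at equilibrium is unique: for any α ∈ [0,1], if (x^H, x^A) and (y^H, y^A) are both equilibria with autonomous fraction α, then Δ(x^H + x^A) = Δ(y^H + y^A). -/
open scoped BigOperators

/-- Equilibrium with autonomous fraction `α`: a feasible path flow pattern
together with multipliers `λ^H, λ^A` satisfying the Wardrop-like conditions. -/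
noncomputable def IsEquilibrium {L P : Type*} [Fintype L] [Fintype P]
    (Δ : L → P → ℝ) (t : L → ℝ → ℝ) (α : ℝ) (xH xA : P → ℝ) : Prop :=
  (∀ p, 0 ≤ xH p) ∧ (∀ p, 0 ≤ xA p) ∧ (∑ p, xH p = 1 - α) ∧ (∑ p, xA p = α) ∧
  ∃ lamH lamA : ℝ, ∀ p : P,
    (lamH ≤ CH Δ t (aggFlow Δ (fun r => xH r + xA r)) p ∧
      (0 < xH p → CH Δ t (aggFlow Δ (fun r => xH r + xA r)) p = lamH)) ∧
    (lamA ≤ CA Δ t (aggFlow Δ (fun r => xH r + xA r)) p ∧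
      (0 < xA p → CA Δ t (aggFlow Δ (fun r => xH r + xA r)) p = lamA))

/-- Baseline equilibrium (`α = 0`): a single nonnegative unit-demand path flow
vector satisfying the human Wardrop condition. -/
noncomputable def IsBaselineEquilibrium {L P : Type*} [Fintype L] [Fintype P]
    (Δ : L → P → ℝ) (t : L → ℝ → ℝ) (xt : P → ℝ) : Prop :=
  (∀ p, 0 ≤ xt p) ∧ (∑ p, xt p = 1) ∧
  ∃ lam : ℝ, ∀ p : P,
    lam ≤ CH Δ t (aggFlow Δ xt) p ∧ (0 < xt p → CH Δ t (aggFlow Δ xt) p = lam)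

/-- BPR assumption: `t_a(z) = k_a z^n + b_a` for `z ≥ 0`, with `k_a > 0`,
`b_a ≥ 0`, and exponent `n ≥ 1`. -/
def IsBPR {L : Type*} (t : L → ℝ → ℝ) (n : ℝ) (k b : L → ℝ) : Prop :=
  1 ≤ n ∧ (∀ a, 0 < k a) ∧ (∀ a, 0 ≤ b a) ∧
  ∀ a, ∀ z : ℝ, 0 ≤ z → t a z = k a * z ^ n + b a

/-- VI-type inequality from Wardrop conditions. -/
lemma vi_le {P : Type*} [Fintype P] (c : P → ℝ) (lam : ℝ) (x y : P → ℝ)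
    (hx : ∀ p, 0 ≤ x p) (hy : ∀ p, 0 ≤ y p)
    (hge : ∀ p, lam ≤ c p) (heq : ∀ p, 0 < x p → c p = lam)
    (hsum : ∑ p, x p = ∑ p, y p) :
    ∑ p, c p * x p ≤ ∑ p, c p * y p := by
  have h1 : ∑ p, c p * x p = lam * ∑ p, x p := by
    rw [Finset.mul_sum]
    refine Finset.sum_congr rfl fun p _ => ?_
    rcases (hx p).lt_or_eq with h | h
    · rw [heq p h]
    · rw [← h]; ring
  have h2 : lam * ∑ p, y p ≤ ∑ p, c p * y p := by
    rw [Finset.mul_sum]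
    exact Finset.sum_le_sum fun p _ => mul_le_mul_of_nonneg_right (hge p) (hy p)
  rw [h1, hsum]; exact h2

lemma sum_swap_agg {L P : Type*} [Fintype L] [Fintype P] (Δ : L → P → ℝ) (w : L → ℝ) (z : P → ℝ) :
    ∑ p, (∑ a, Δ a p * w a) * z p = ∑ a, w a * (∑ p, Δ a p * z p) := by
  simp_rw [Finset.sum_mul, Finset.mul_sum]
  rw [Finset.sum_comm]
  exact Finset.sum_congr rfl fun a _ => Finset.sum_congr rfl fun p _ => by ring

/-- Marginal cost under BPR. -/
lemma bpr_marginal (t : ℝ → ℝ) (n k b : ℝ) (hn : 1 ≤ n)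
    (ht : ∀ z : ℝ, 0 ≤ z → t z = k * z ^ n + b)
    (z : ℝ) (hz : 0 ≤ z) : t z + z * deriv t z = (1 + n) * (k * z ^ n) + b := by
  rcases hz.lt_or_eq with hz' | hz'
  · have hne : z ≠ 0 := ne_of_gt hz'
    have h1 : HasDerivAt (fun w : ℝ => w ^ n) (n * z ^ (n - 1)) z :=
      Real.hasDerivAt_rpow_const (Or.inl hne)
    have h2 : HasDerivAt (fun w : ℝ => k * w ^ n + b) (k * (n * z ^ (n - 1))) z :=
      (h1.const_mul k).add_const b
    have heq : t =ᶠ[nhds z] fun w => k * w ^ n + b := by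
      filter_upwards [Ioi_mem_nhds hz'] with w hw
      exact ht w (le_of_lt hw)
    have h3 : HasDerivAt t (k * (n * z ^ (n - 1))) z := h2.congr_of_eventuallyEq heq
    rw [ht z hz, h3.deriv]
    have h4 : z * z ^ (n - 1) = z ^ n := by
      rw [Real.rpow_sub hz', Real.rpow_one]
      field_simp
    linear_combination (k * n) * h4
  · rw [← hz']
    have h0 : (0 : ℝ) ^ n = 0 := Real.zero_rpow (by linarith)
    rw [ht 0 le_rfl, h0]
    ring

lemma mono_aux (n : ℝ) (hn : 1 ≤ n) (k : ℝ) (hk : 0 < k) (u v : ℝ)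
    (hu : 0 ≤ u) (hv : 0 ≤ v) :
    0 ≤ (k * u ^ n - k * v ^ n) * (u - v) ∧
      ((k * u ^ n - k * v ^ n) * (u - v) = 0 → u = v) := by
  rcases lt_trichotomy u v with h | h | h
  · have hp : u ^ n < v ^ n := Real.rpow_lt_rpow hu h (by linarith)
    have hpos : 0 < (k * u ^ n - k * v ^ n) * (u - v) :=
      mul_pos_of_neg_of_neg (by nlinarith) (by linarith)
    exact ⟨le_of_lt hpos, fun h0 => by linarith⟩
  · subst h; exact ⟨by nlinarith, fun _ => rfl⟩
  · have hp : v ^ n < u ^ n := Real.rpow_lt_rpow hv h (by linarith)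
    have hpos : 0 < (k * u ^ n - k * v ^ n) * (u - v) :=
      mul_pos (by nlinarith) (by linarith)
    exact ⟨le_of_lt hpos, fun h0 => by linarith⟩

/-- Theorem 2 (uniqueness of the aggregated link flow): under the BPR assumption,
any two equilibria with the same autonomous fraction `α ∈ [0,1]` induce the same
aggregated link flow. -/
theorem aggregated_flow_unique {L P : Type*} [Fintype L] [Fintype P] [Nonempty P]
    (Δ : L → P → ℝ) (hΔ : ∀ a p, Δ a p = 0 ∨ Δ a p = 1)
    (t : L → ℝ → ℝ) (n : ℝ) (k b : L → ℝ) (hBPR : IsBPR t n k b)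
    (α : ℝ) (hα : α ∈ Set.Icc (0:ℝ) 1)
    (xH xA yH yA : P → ℝ)
    (hx : IsEquilibrium Δ t α xH xA) (hy : IsEquilibrium Δ t α yH yA) :
    aggFlow Δ (fun r => xH r + xA r) = aggFlow Δ (fun r => yH r + yA r) := by
  obtain ⟨hn1, hk, hb, ht⟩ := hBPR
  obtain ⟨hxH0, hxA0, hxHs, hxAs, lamHx, lamAx, hwx⟩ := hx
  obtain ⟨hyH0, hyA0, hyHs, hyAs, lamHy, lamAy, hwy⟩ := hy
  set f := aggFlow Δ (fun r => xH r + xA r) with hfdef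
  set g := aggFlow Δ (fun r => yH r + yA r) with hgdef
  have hagg : ∀ (x : P → ℝ), (∀ p, 0 ≤ x p) → ∀ a, 0 ≤ aggFlow Δ x a := by
    intro x h0 a
    exact Finset.sum_nonneg fun p _ =>
      mul_nonneg (by rcases hΔ a p with h | h <;> simp [h]) (h0 p)
  have hf0 : ∀ a, 0 ≤ f a := hagg _ fun p => add_nonneg (hxH0 p) (hxA0 p)
  have hg0 : ∀ a, 0 ≤ g a := hagg _ fun p => add_nonneg (hyH0 p) (hyA0 p)
  set d : L → ℝ := fun a => k a * f a ^ n - k a * g a ^ n with hddef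
  have htf : ∀ a, t a (f a) = k a * f a ^ n + b a := fun a => ht a _ (hf0 a)
  have htg : ∀ a, t a (g a) = k a * g a ^ n + b a := fun a => ht a _ (hg0 a)
  have hmf : ∀ a, t a (f a) + f a * deriv (t a) (f a) = (1 + n) * (k a * f a ^ n) + b a :=
    fun a => bpr_marginal (t a) n (k a) (b a) hn1 (ht a) (f a) (hf0 a)
  have hmg : ∀ a, t a (g a) + g a * deriv (t a) (g a) = (1 + n) * (k a * g a ^ n) + b a :=
    fun a => bpr_marginal (t a) n (k a) (b a) hn1 (ht a) (g a) (hg0 a)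
  -- CH and CA differences in link form
  have hCH : ∀ p, CH Δ t f p - CH Δ t g p = ∑ a, Δ a p * d a := by
    intro p
    unfold CH
    rw [← Finset.sum_sub_distrib]
    refine Finset.sum_congr rfl fun a _ => ?_
    rw [htf a, htg a]; simp only [hddef]; ring
  have hCA : ∀ p, CA Δ t f p - CA Δ t g p = ∑ a, Δ a p * ((1 + n) * d a) := by
    intro p
    unfold CA
    rw [← Finset.sum_sub_distrib]
    refine Finset.sum_congr rfl fun a _ => ?_
    rw [hmf a, hmg a]; simp only [hddef]; ring
  -- VI inequalities
  have hA1 : ∑ p, CH Δ t f p * xH p ≤ ∑ p, CH Δ t f p * yH p :=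
    vi_le _ lamHx _ _ hxH0 hyH0 (fun p => ((hwx p).1).1) (fun p hp => ((hwx p).1).2 hp)
      (by rw [hxHs, hyHs])
  have hA2 : ∑ p, CH Δ t g p * yH p ≤ ∑ p, CH Δ t g p * xH p :=
    vi_le _ lamHy _ _ hyH0 hxH0 (fun p => ((hwy p).1).1) (fun p hp => ((hwy p).1).2 hp)
      (by rw [hxHs, hyHs])
  have hB1 : ∑ p, CA Δ t f p * xA p ≤ ∑ p, CA Δ t f p * yA p :=
    vi_le _ lamAx _ _ hxA0 hyA0 (fun p => ((hwx p).2).1) (fun p hp => ((hwx p).2).2 hp)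
      (by rw [hxAs, hyAs])
  have hB2 : ∑ p, CA Δ t g p * yA p ≤ ∑ p, CA Δ t g p * xA p :=
    vi_le _ lamAy _ _ hyA0 hxA0 (fun p => ((hwy p).2).1) (fun p hp => ((hwy p).2).2 hp)
      (by rw [hxAs, hyAs])
  -- path-level monotonicity sums
  have eH : ∑ p, (CH Δ t f p - CH Δ t g p) * (xH p - yH p) =
      (∑ p, CH Δ t f p * xH p - ∑ p, CH Δ t f p * yH p) +
      (∑ p, CH Δ t g p * yH p - ∑ p, CH Δ t g p * xH p) := by
    rw [← Finset.sum_sub_distrib, ← Finset.sum_sub_distrib, ← Finset.sum_add_distrib]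
    exact Finset.sum_congr rfl fun p _ => by ring
  have eA : ∑ p, (CA Δ t f p - CA Δ t g p) * (xA p - yA p) =
      (∑ p, CA Δ t f p * xA p - ∑ p, CA Δ t f p * yA p) +
      (∑ p, CA Δ t g p * yA p - ∑ p, CA Δ t g p * xA p) := by
    rw [← Finset.sum_sub_distrib, ← Finset.sum_sub_distrib, ← Finset.sum_add_distrib]
    exact Finset.sum_congr rfl fun p _ => by ring
  have hHle : ∑ p, (CH Δ t f p - CH Δ t g p) * (xH p - yH p) ≤ 0 := by
    rw [eH]; linarith
  have hAle : ∑ p, (CA Δ t f p - CA Δ t g p) * (xA p - yA p) ≤ 0 := by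
    rw [eA]; linarith
  -- convert to link form
  have eH2 : ∑ p, (CH Δ t f p - CH Δ t g p) * (xH p - yH p) =
      ∑ a, d a * (∑ p, Δ a p * (xH p - yH p)) := by
    rw [← sum_swap_agg]
    exact Finset.sum_congr rfl fun p _ => by rw [hCH p]
  have eA2 : ∑ p, (CA Δ t f p - CA Δ t g p) * (xA p - yA p) =
      ∑ a, ((1 + n) * d a) * (∑ p, Δ a p * (xA p - yA p)) := by
    rw [← sum_swap_agg]
    exact Finset.sum_congr rfl fun p _ => by rw [hCA p]
  have keyH : ∑ a, d a * (∑ p, Δ a p * (xH p - yH p)) ≤ 0 := eH2 ▸ hHle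
  have keyA' : (1 + n) * ∑ a, d a * (∑ p, Δ a p * (xA p - yA p)) ≤ 0 := by
    rw [Finset.mul_sum]
    calc ∑ a, (1 + n) * (d a * ∑ p, Δ a p * (xA p - yA p))
        = ∑ a, ((1 + n) * d a) * (∑ p, Δ a p * (xA p - yA p)) :=
          Finset.sum_congr rfl fun a _ => by ring
      _ ≤ 0 := eA2 ▸ hAle
  have hn0 : (0:ℝ) < 1 + n := by linarith
  have keyA : ∑ a, d a * (∑ p, Δ a p * (xA p - yA p)) ≤ 0 := by
    nlinarith [keyA']
  -- total monotonicity sum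
  have hsplit : ∀ a, f a - g a =
      (∑ p, Δ a p * (xH p - yH p)) + (∑ p, Δ a p * (xA p - yA p)) := by
    intro a
    rw [← Finset.sum_add_distrib]
    show (∑ p, Δ a p * (xH p + xA p)) - (∑ p, Δ a p * (yH p + yA p)) = _
    rw [← Finset.sum_sub_distrib]
    exact Finset.sum_congr rfl fun p _ => by ring
  have htotal : ∑ a, d a * (f a - g a) ≤ 0 := by
    calc ∑ a, d a * (f a - g a)
        = ∑ a, (d a * (∑ p, Δ a p * (xH p - yH p)) +
            d a * (∑ p, Δ a p * (xA p - yA p))) :=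
          Finset.sum_congr rfl fun a _ => by rw [hsplit a]; ring
      _ = (∑ a, d a * (∑ p, Δ a p * (xH p - yH p))) +
            ∑ a, d a * (∑ p, Δ a p * (xA p - yA p)) := Finset.sum_add_distrib
      _ ≤ 0 := by linarith
  have hterm : ∀ a, 0 ≤ d a * (f a - g a) := fun a =>
    (mono_aux n hn1 (k a) (hk a) (f a) (g a) (hf0 a) (hg0 a)).1
  have hzero : ∑ a, d a * (f a - g a) = 0 :=
    le_antisymm htotal (Finset.sum_nonneg fun a _ => hterm a)
  have hall := (Finset.sum_eq_zero_iff_of_nonneg (fun a _ => hterm a)).mp hzero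
  funext a
  exact (mono_aux n hn1 (k a) (hk a) (f a) (g a) (hf0 a) (hg0 a)).2
    (hall a (Finset.mem_univ a))
end

section
/- Under the BPR assumption, the social cost at equilibrium is unique: for any α ∈ [0,1], if (x^H, x^A) and (y^H, y^A) are both equilibria with autonomous fraction α, then S(Δ(x^H + x^A)) = S(Δ(y^H + y^A)). -/
open scoped BigOperators

/-!
Under the BPR assumption the autonomous cost is an affine image of the human cost,
`C^A(f) = (n + 1) C^H(f) - β` with `β_p = n Σ_a Δ_{ap} b_a` independent of `f`.
Weighting the human Wardrop inequalities by `n + 1` and adding the autonomous ones for two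
equilibria `x`, `y`, the constant `β` cancels and one is left with the monotonicity pairing
`Σ_a (t_a(f_a) - t_a(g_a)) (f_a - g_a) ≤ 0` of the two link flows. Since every `t_a` is strictly
increasing on `[0, ∞)`, this forces `f = g`, so the social costs agree.
-/

section PathSums

variable {P : Type*} [Fintype P]

lemma sum_mul_le_sum_mul_of_wardrop {c x y : P → ℝ} {lam : ℝ}
    (hc : ∀ p, lam ≤ c p) (hcx : ∀ p, 0 < x p → c p = lam)
    (hx : ∀ p, 0 ≤ x p) (hy : ∀ p, 0 ≤ y p) (hxy : ∑ p, x p = ∑ p, y p) :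
    ∑ p, c p * x p ≤ ∑ p, c p * y p := by
  have hcx' : ∀ p, c p * x p = lam * x p := fun p => by
    rcases (hx p).eq_or_lt with h | h
    · simp [← h]
    · rw [hcx p h]
  calc ∑ p, c p * x p = lam * ∑ p, y p := by simp only [hcx', ← Finset.mul_sum, hxy]
    _ ≤ ∑ p, c p * y p := by
      rw [Finset.mul_sum]
      exact Finset.sum_le_sum fun p _ => mul_le_mul_of_nonneg_right (hc p) (hy p)

lemma sum_sub_mul_sub_nonpos {c d x y : P → ℝ} (hc : ∑ p, c p * x p ≤ ∑ p, c p * y p)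
    (hd : ∑ p, d p * y p ≤ ∑ p, d p * x p) : ∑ p, (c p - d p) * (x p - y p) ≤ 0 := by
  simp only [sub_mul, mul_sub, Finset.sum_sub_distrib]
  linarith

end PathSums

section Flows

variable {L P : Type*} [Fintype P]

lemma aggFlow_nonneg {Δ : L → P → ℝ} (hΔ : ∀ a p, 0 ≤ Δ a p) {x : P → ℝ}
    (hx : ∀ p, 0 ≤ x p) (a : L) : 0 ≤ aggFlow Δ x a :=
  Finset.sum_nonneg fun p _ => mul_nonneg (hΔ a p) (hx p)

lemma aggFlow_sub (Δ : L → P → ℝ) (x y : P → ℝ) (a : L) :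
    aggFlow Δ (fun p => x p - y p) a = aggFlow Δ x a - aggFlow Δ y a := by
  simp only [aggFlow, mul_sub, Finset.sum_sub_distrib]

variable [Fintype L]

lemma sum_sum_mul_eq_sum_mul_aggFlow (Δ : L → P → ℝ) (u : L → ℝ) (v : P → ℝ) :
    ∑ p, (∑ a, Δ a p * u a) * v p = ∑ a, u a * aggFlow Δ v a := by
  simp only [aggFlow, Finset.sum_mul, Finset.mul_sum]
  rw [Finset.sum_comm]
  exact Finset.sum_congr rfl fun a _ => Finset.sum_congr rfl fun p _ => by ring

lemma sum_CH_sub_CH_mul (Δ : L → P → ℝ) (t : L → ℝ → ℝ) (f g : L → ℝ) (v : P → ℝ) :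
    ∑ p, (CH Δ t f p - CH Δ t g p) * v p =
      ∑ a, (t a (f a) - t a (g a)) * aggFlow Δ v a := by
  simp only [CH, ← Finset.sum_sub_distrib, ← mul_sub]
  exact sum_sum_mul_eq_sum_mul_aggFlow Δ _ v

lemma eq_of_sum_sub_mul_sub_nonpos {φ : L → ℝ → ℝ} {s : Set ℝ}
    (hφ : ∀ a, StrictMonoOn (φ a) s) {f g : L → ℝ} (hf : ∀ a, f a ∈ s) (hg : ∀ a, g a ∈ s)
    (h : ∑ a, (φ a (f a) - φ a (g a)) * (f a - g a) ≤ 0) : f = g := by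
  have hpos : ∀ a, f a ≠ g a → 0 < (φ a (f a) - φ a (g a)) * (f a - g a) := fun a hne => by
    rcases hne.lt_or_gt with hlt | hlt
    · exact mul_pos_of_neg_of_neg (sub_neg.2 (hφ a (hf a) (hg a) hlt)) (sub_neg.2 hlt)
    · exact mul_pos (sub_pos.2 (hφ a (hg a) (hf a) hlt)) (sub_pos.2 hlt)
  have hnonneg : ∀ a, 0 ≤ (φ a (f a) - φ a (g a)) * (f a - g a) := fun a => by
    by_cases hfg : f a = g a
    · simp [hfg]
    · exact (hpos a hfg).le
  have hzero := (Finset.sum_eq_zero_iff_of_nonneg fun a _ => hnonneg a).1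
    (le_antisymm h (Finset.sum_nonneg fun a _ => hnonneg a))
  funext a
  by_contra hfg
  exact (hpos a hfg).ne' (hzero a (Finset.mem_univ a))

end Flows

namespace IsBPR

variable {L : Type*} {t : L → ℝ → ℝ} {n : ℝ} {k b : L → ℝ}

lemma strictMonoOn (h : IsBPR t n k b) (a : L) : StrictMonoOn (t a) (Set.Ici 0) := by
  obtain ⟨hn, hk, -, ht⟩ := h
  intro z hz w hw hzw
  rw [ht a z hz, ht a w hw]
  exact add_lt_add_left (mul_lt_mul_of_pos_left (Real.rpow_lt_rpow hz hzw (by linarith)) (hk a)) _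

lemma add_mul_deriv (h : IsBPR t n k b) (a : L) {z : ℝ} (hz : 0 ≤ z) :
    t a z + z * deriv (t a) z = (n + 1) * t a z - n * b a := by
  obtain ⟨hn, -, -, ht⟩ := h
  rcases hz.eq_or_lt with rfl | hzpos
  · simp only [ht a 0 le_rfl, Real.zero_rpow (show n ≠ 0 by linarith)]
    ring
  · have hloc : t a =ᶠ[nhds z] fun w => k a * w ^ n + b a :=
      Filter.eventuallyEq_of_mem (Ioi_mem_nhds hzpos) fun w hw => ht a w (le_of_lt hw)
    have hderiv : HasDerivAt (fun w => k a * w ^ n + b a) (k a * (n * z ^ (n - 1))) z :=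
      ((Real.hasDerivAt_rpow_const (Or.inl hzpos.ne')).const_mul (k a)).add_const (b a)
    have hpow : z * z ^ (n - 1) = z ^ n := by
      rw [mul_comm, ← Real.rpow_add_one hzpos.ne', sub_add_cancel]
    rw [hloc.deriv_eq, hderiv.deriv, ht a z hz, ← hpow]
    ring

lemma CA_eq [Fintype L] {P : Type*} (h : IsBPR t n k b) (Δ : L → P → ℝ) {f : L → ℝ}
    (hf : ∀ a, 0 ≤ f a) (p : P) :
    CA Δ t f p = (n + 1) * CH Δ t f p - n * ∑ a, Δ a p * b a := by
  simp only [CA, CH, h.add_mul_deriv _ (hf _), Finset.mul_sum, ← Finset.sum_sub_distrib]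
  exact Finset.sum_congr rfl fun a _ => by ring

lemma CA_sub_CA [Fintype L] {P : Type*} (h : IsBPR t n k b) (Δ : L → P → ℝ) {f g : L → ℝ}
    (hf : ∀ a, 0 ≤ f a) (hg : ∀ a, 0 ≤ g a) (p : P) :
    CA Δ t f p - CA Δ t g p = (n + 1) * (CH Δ t f p - CH Δ t g p) := by
  rw [h.CA_eq Δ hf, h.CA_eq Δ hg]
  ring

end IsBPR

section Equilibrium

variable {L P : Type*} [Fintype L] [Fintype P] {Δ : L → P → ℝ} {t : L → ℝ → ℝ} {α : ℝ}
  {xH xA yH yA : P → ℝ}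

lemma IsEquilibrium.aggFlow_nonneg (hΔ : ∀ a p, 0 ≤ Δ a p) (hx : IsEquilibrium Δ t α xH xA) :
    ∀ a, 0 ≤ aggFlow Δ (fun r => xH r + xA r) a :=
  _root_.aggFlow_nonneg hΔ fun p => add_nonneg (hx.1 p) (hx.2.1 p)

lemma IsEquilibrium.sum_mul_le (hx : IsEquilibrium Δ t α xH xA)
    (hy : IsEquilibrium Δ t α yH yA) :
    (∑ p, CH Δ t (aggFlow Δ (fun r => xH r + xA r)) p * xH p ≤
        ∑ p, CH Δ t (aggFlow Δ (fun r => xH r + xA r)) p * yH p) ∧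
      ∑ p, CA Δ t (aggFlow Δ (fun r => xH r + xA r)) p * xA p ≤
        ∑ p, CA Δ t (aggFlow Δ (fun r => xH r + xA r)) p * yA p := by
  obtain ⟨hxH, hxA, hxHs, hxAs, lamH, lamA, hw⟩ := hx
  obtain ⟨hyH, hyA, hyHs, hyAs, -⟩ := hy
  exact ⟨sum_mul_le_sum_mul_of_wardrop (fun p => (hw p).1.1) (fun p => (hw p).1.2) hxH hyH
      (hxHs.trans hyHs.symm),
    sum_mul_le_sum_mul_of_wardrop (fun p => (hw p).2.1) (fun p => (hw p).2.2) hxA hyA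
      (hxAs.trans hyAs.symm)⟩

lemma IsEquilibrium.sum_CH_sub_CH_mul_nonpos {n : ℝ} {k b : L → ℝ} (hBPR : IsBPR t n k b)
    (hΔ : ∀ a p, 0 ≤ Δ a p) (hx : IsEquilibrium Δ t α xH xA) (hy : IsEquilibrium Δ t α yH yA) :
    ∑ p, (CH Δ t (aggFlow Δ (fun r => xH r + xA r)) p -
        CH Δ t (aggFlow Δ (fun r => yH r + yA r)) p) * ((xH p + xA p) - (yH p + yA p)) ≤ 0 := by
  have hf := hx.aggFlow_nonneg hΔ
  have hg := hy.aggFlow_nonneg hΔ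
  have hn : 0 < n + 1 := by linarith [hBPR.1]
  have hH := sum_sub_mul_sub_nonpos (hx.sum_mul_le hy).1 (hy.sum_mul_le hx).1
  have hA := sum_sub_mul_sub_nonpos (hx.sum_mul_le hy).2 (hy.sum_mul_le hx).2
  simp only [hBPR.CA_sub_CA Δ hf hg, mul_assoc, ← Finset.mul_sum] at hA
  simp only [add_sub_add_comm, mul_add, Finset.sum_add_distrib]
  exact add_nonpos hH (nonpos_of_mul_nonpos_right hA hn)

end Equilibrium

theorem social_cost_unique_general {L P : Type*} [Fintype L] [Fintype P]
    (Δ : L → P → ℝ) (hΔ : ∀ a p, Δ a p = 0 ∨ Δ a p = 1)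
    (t : L → ℝ → ℝ) (n : ℝ) (k b : L → ℝ) (hBPR : IsBPR t n k b)
    (α : ℝ)
    (xH xA yH yA : P → ℝ)
    (hx : IsEquilibrium Δ t α xH xA) (hy : IsEquilibrium Δ t α yH yA) :
    Scost t (aggFlow Δ (fun r => xH r + xA r)) =
      Scost t (aggFlow Δ (fun r => yH r + yA r)) := by
  have hΔ' : ∀ a p, 0 ≤ Δ a p := fun a p => by rcases hΔ a p with h | h <;> simp [h]
  have hmono := hx.sum_CH_sub_CH_mul_nonpos hBPR hΔ' hy
  rw [sum_CH_sub_CH_mul] at hmono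
  simp only [aggFlow_sub] at hmono
  have hfg := eq_of_sum_sub_mul_sub_nonpos hBPR.strictMonoOn
    (hx.aggFlow_nonneg hΔ') (hy.aggFlow_nonneg hΔ') hmono
  rw [hfg]

/-- Uniqueness of the equilibrium social cost: under the BPR assumption,
any two equilibria with the same autonomous fraction `α ∈ [0,1]` have the same
social cost. -/
theorem social_cost_unique {L P : Type*} [Fintype L] [Fintype P] [Nonempty P]
    (Δ : L → P → ℝ) (hΔ : ∀ a p, Δ a p = 0 ∨ Δ a p = 1)
    (t : L → ℝ → ℝ) (n : ℝ) (k b : L → ℝ) (hBPR : IsBPR t n k b)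
    (α : ℝ) (hα : α ∈ Set.Icc (0:ℝ) 1)
    (xH xA yH yA : P → ℝ)
    (hx : IsEquilibrium Δ t α xH xA) (hy : IsEquilibrium Δ t α yH yA) :
    Scost t (aggFlow Δ (fun r => xH r + xA r)) =
      Scost t (aggFlow Δ (fun r => yH r + yA r)) :=
  social_cost_unique_general Δ hΔ t n k b hBPR α xH xA yH yA hx hy
end

section
/- Under the BPR assumption, suppose all paths have the same free-flow travel time: there exists b₀ ∈ ℝ such that Σ_a Δ_{ap} b_a = b₀ for every path p (equivalently, Δᵀ b = b₀ 𝟙). Then for every α ∈ [0,1], every equilibrium (x^H, x^A) with autonomous fraction α, and every baseline equilibrium x̃ (α = 0), the social costs coincide: S(Δ(x^H + x^A)) = S(Δx̃). -/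
open scoped BigOperators

lemma flow_nonneg' {L P : Type*} [Fintype P] (Δ : L → P → ℝ)
    (hΔ : ∀ a p, Δ a p = 0 ∨ Δ a p = 1) (x : P → ℝ) (hx : ∀ p, 0 ≤ x p) (a : L) :
    0 ≤ aggFlow Δ x a := by
  refine Finset.sum_nonneg fun p _ => ?_
  rcases hΔ a p with h | h <;> simp [h, hx p]

lemma sum_swap_CH {L P : Type*} [Fintype L] [Fintype P] (Δ : L → P → ℝ) (t : L → ℝ → ℝ)
    (f : L → ℝ) (y : P → ℝ) :
    ∑ p, y p * CH Δ t f p = ∑ a, aggFlow Δ y a * t a (f a) := by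
  unfold CH aggFlow
  simp only [Finset.mul_sum, Finset.sum_mul]
  rw [Finset.sum_comm]
  exact Finset.sum_congr rfl fun a _ => Finset.sum_congr rfl fun p _ => by ring

lemma VI {L P : Type*} [Fintype L] [Fintype P] (Δ : L → P → ℝ) (t : L → ℝ → ℝ)
    (x : P → ℝ) (hx : IsBaselineEquilibrium Δ t x)
    (y : P → ℝ) (hy : ∀ p, 0 ≤ y p) (hy1 : ∑ p, y p = 1) :
    ∑ a, aggFlow Δ x a * t a (aggFlow Δ x a) ≤
      ∑ a, aggFlow Δ y a * t a (aggFlow Δ x a) := by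
  obtain ⟨hx0, hx1, lam, hlam⟩ := hx
  rw [← sum_swap_CH, ← sum_swap_CH]
  have h1 : ∑ p, x p * CH Δ t (aggFlow Δ x) p = lam := by
    have : ∀ p ∈ Finset.univ, x p * CH Δ t (aggFlow Δ x) p = x p * lam := by
      intro p _
      rcases eq_or_lt_of_le (hx0 p) with h | h
      · simp [← h]
      · rw [(hlam p).2 h]
    rw [Finset.sum_congr rfl this, ← Finset.sum_mul, hx1, one_mul]
  have h2 : lam ≤ ∑ p, y p * CH Δ t (aggFlow Δ x) p := by
    calc lam = ∑ p, y p * lam := by rw [← Finset.sum_mul, hy1, one_mul]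
    _ ≤ _ := Finset.sum_le_sum fun p _ => mul_le_mul_of_nonneg_left (hlam p).1 (hy p)
  linarith [h1, h2]

lemma flows_eq {L P : Type*} [Fintype L] [Fintype P] (Δ : L → P → ℝ)
    (hΔ : ∀ a p, Δ a p = 0 ∨ Δ a p = 1) (t : L → ℝ → ℝ)
    (hmono : ∀ a : L, ∀ z w : ℝ, 0 ≤ z → 0 ≤ w → z < w → t a z < t a w)
    (x y : P → ℝ) (hx : IsBaselineEquilibrium Δ t x) (hy : IsBaselineEquilibrium Δ t y) :
    aggFlow Δ x = aggFlow Δ y := by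
  set f := aggFlow Δ x
  set g := aggFlow Δ y
  have hf0 : ∀ a, 0 ≤ f a := flow_nonneg' Δ hΔ x hx.1
  have hg0 : ∀ a, 0 ≤ g a := flow_nonneg' Δ hΔ y hy.1
  have h1 := VI Δ t x hx y hy.1 hy.2.1
  have h2 := VI Δ t y hy x hx.1 hx.2.1
  have hsum : 0 ≤ ∑ a, (g a - f a) * (t a (f a) - t a (g a)) := by
    have : ∑ a, (g a - f a) * (t a (f a) - t a (g a)) =
        (∑ a, g a * t a (f a) - ∑ a, f a * t a (f a)) +
        (∑ a, f a * t a (g a) - ∑ a, g a * t a (g a)) := by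
      rw [← Finset.sum_sub_distrib, ← Finset.sum_sub_distrib, ← Finset.sum_add_distrib]
      exact Finset.sum_congr rfl fun a _ => by ring
    rw [this]
    have h1' : f ≤ g → True := fun _ => trivial
    linarith [h1, h2]
  have hterm : ∀ a : L, (g a - f a) * (t a (f a) - t a (g a)) ≤ 0 := by
    intro a
    rcases lt_trichotomy (f a) (g a) with h | h | h
    · have := hmono a (f a) (g a) (hf0 a) (hg0 a) h
      nlinarith
    · simp [h]
    · have := hmono a (g a) (f a) (hg0 a) (hf0 a) h
      nlinarith
  have hsum0 : ∑ a, (g a - f a) * (t a (f a) - t a (g a)) = 0 :=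
    le_antisymm (Finset.sum_nonpos fun a _ => hterm a) hsum
  have hzero : ∀ a ∈ Finset.univ, (g a - f a) * (t a (f a) - t a (g a)) = 0 :=
    (Finset.sum_eq_zero_iff_of_nonpos fun a _ => hterm a).mp hsum0
  funext a
  have h0 := hzero a (Finset.mem_univ a)
  rcases lt_trichotomy (f a) (g a) with h | h | h
  · have := hmono a (f a) (g a) (hf0 a) (hg0 a) h
    nlinarith
  · exact h
  · have := hmono a (g a) (f a) (hg0 a) (hf0 a) h
    nlinarith

lemma bpr_mono {L : Type*} (t : L → ℝ → ℝ) (n : ℝ) (k b : L → ℝ) (hBPR : IsBPR t n k b) :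
    ∀ a : L, ∀ z w : ℝ, 0 ≤ z → 0 ≤ w → z < w → t a z < t a w := by
  obtain ⟨hn, hk, hb, ht⟩ := hBPR
  intro a z w hz hw hzw
  rw [ht a z hz, ht a w hw]
  have : z ^ n < w ^ n := Real.rpow_lt_rpow hz hzw (by linarith)
  nlinarith [hk a]

lemma bpr_deriv {L : Type*} (t : L → ℝ → ℝ) (n : ℝ) (k b : L → ℝ) (hBPR : IsBPR t n k b)
    (a : L) (z : ℝ) (hz : 0 ≤ z) : z * deriv (t a) z = n * (k a * z ^ n) := by
  obtain ⟨hn, hk, hb, ht⟩ := hBPR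
  rcases eq_or_lt_of_le hz with h | h
  · rw [← h, Real.zero_rpow (by linarith : n ≠ 0)]
    ring
  · have heq : t a =ᶠ[nhds z] fun w => k a * w ^ n + b a := by
      filter_upwards [Ioi_mem_nhds h] with w hw
      exact ht a w (le_of_lt hw)
    have hd : HasDerivAt (fun w : ℝ => k a * w ^ n + b a) (k a * (n * z ^ (n - 1))) z :=
      ((Real.hasDerivAt_rpow_const (Or.inl (ne_of_gt h))).const_mul (k a)).add_const (b a)
    rw [heq.deriv_eq, hd.deriv]
    have hzz : z ^ (n - 1) * z = z ^ n := by
      nth_rewrite 2 [← Real.rpow_one z]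
      rw [← Real.rpow_add h]
      ring_nf
    linear_combination (n * k a) * hzz

lemma CA_eq_CH {L P : Type*} [Fintype L] [Fintype P] (Δ : L → P → ℝ)
    (hΔ : ∀ a p, Δ a p = 0 ∨ Δ a p = 1)
    (t : L → ℝ → ℝ) (n : ℝ) (k b : L → ℝ) (hBPR : IsBPR t n k b)
    (b₀ : ℝ) (hfree : ∀ p : P, ∑ a, Δ a p * b a = b₀)
    (f : L → ℝ) (hf : ∀ a, 0 ≤ f a) (p : P) :
    CA Δ t f p = (n + 1) * (CH Δ t f p - b₀) + b₀ := by
  have hG : CH Δ t f p = (∑ a, Δ a p * (k a * f a ^ n)) + b₀ := by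
    unfold CH
    rw [← hfree p, ← Finset.sum_add_distrib]
    exact Finset.sum_congr rfl fun a _ => by rw [hBPR.2.2.2 a (f a) (hf a)]; ring
  have hA : CA Δ t f p = (n + 1) * (∑ a, Δ a p * (k a * f a ^ n)) + b₀ := by
    unfold CA
    rw [← hfree p, Finset.mul_sum, ← Finset.sum_add_distrib]
    refine Finset.sum_congr rfl fun a _ => ?_
    rw [hBPR.2.2.2 a (f a) (hf a), bpr_deriv t n k b hBPR a (f a) (hf a)]
    ring
  rw [hA, hG]; ring

lemma mixed_is_baseline {L P : Type*} [Fintype L] [Fintype P] (Δ : L → P → ℝ)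
    (hΔ : ∀ a p, Δ a p = 0 ∨ Δ a p = 1)
    (t : L → ℝ → ℝ) (n : ℝ) (k b : L → ℝ) (hBPR : IsBPR t n k b)
    (b₀ : ℝ) (hfree : ∀ p : P, ∑ a, Δ a p * b a = b₀)
    (α : ℝ) (xH xA : P → ℝ) (heq : IsEquilibrium Δ t α xH xA) :
    IsBaselineEquilibrium Δ t (fun r => xH r + xA r) := by
  obtain ⟨hH0, hA0, hH1, hA1, lamH, lamA, hlam⟩ := heq
  set x : P → ℝ := fun r => xH r + xA r with hx
  set f := aggFlow Δ x with hfdef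
  have hf : ∀ a, 0 ≤ f a :=
    flow_nonneg' Δ hΔ x (fun p => add_nonneg (hH0 p) (hA0 p))
  have hn1 : (0:ℝ) < n + 1 := by have := hBPR.1; linarith
  have hCA : ∀ p, CA Δ t f p = (n + 1) * (CH Δ t f p - b₀) + b₀ :=
    CA_eq_CH Δ hΔ t n k b hBPR b₀ hfree f hf
  refine ⟨fun p => add_nonneg (hH0 p) (hA0 p), by show ∑ p, (xH p + xA p) = 1; rw [Finset.sum_add_distrib, hH1, hA1]; ring,
    max lamH ((lamA - b₀) / (n + 1) + b₀), fun p => ?_⟩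
  have h1 : lamH ≤ CH Δ t f p := (hlam p).1.1
  have h2 : (lamA - b₀) / (n + 1) + b₀ ≤ CH Δ t f p := by
    have := (hlam p).2.1
    rw [hCA p] at this
    rw [div_add' _ _ _ (ne_of_gt hn1), div_le_iff₀ hn1]
    nlinarith
  constructor
  · exact max_le h1 h2
  · intro hp
    have hsup : 0 < xH p ∨ 0 < xA p := by
      by_contra hc
      push_neg at hc
      have : xH p = 0 := le_antisymm hc.1 (hH0 p)
      have : xA p = 0 := le_antisymm hc.2 (hA0 p)
      simp only [hx] at hp
      linarith
    refine le_antisymm ?_ (max_le h1 h2)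
    rcases hsup with h | h
    · rw [(hlam p).1.2 h]; exact le_max_left _ _
    · have := (hlam p).2.2 h
      rw [hCA p] at this
      have : CH Δ t f p = (lamA - b₀) / (n + 1) + b₀ := by
        field_simp
        nlinarith
      rw [this]; exact le_max_right _ _

/-- Theorem 5 (no effect): under the BPR assumption, if all paths have the same
free-flow travel time `b₀` (i.e. `Σ_a Δ_{ap} b_a = b₀` for every path `p`), then
every mixed-autonomy equilibrium has the same social cost as every baseline
equilibrium. -/
theorem no_effect_condition {L P : Type*} [Fintype L] [Fintype P] [Nonempty P]
    (Δ : L → P → ℝ) (hΔ : ∀ a p, Δ a p = 0 ∨ Δ a p = 1)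
    (t : L → ℝ → ℝ) (n : ℝ) (k b : L → ℝ) (hBPR : IsBPR t n k b)
    (b₀ : ℝ) (hfree : ∀ p : P, ∑ a, Δ a p * b a = b₀)
    (α : ℝ) (hα : α ∈ Set.Icc (0:ℝ) 1)
    (xH xA : P → ℝ) (heq : IsEquilibrium Δ t α xH xA)
    (xt : P → ℝ) (hxt : IsBaselineEquilibrium Δ t xt) :
    Scost t (aggFlow Δ (fun r => xH r + xA r)) = Scost t (aggFlow Δ xt) := by
  have hbase := mixed_is_baseline Δ hΔ t n k b hBPR b₀ hfree α xH xA heq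
  have := flows_eq Δ hΔ t (bpr_mono t n k b hBPR) _ _ hbase hxt
  rw [this]
end

section
/- Suppose the network consists of parallel links: 𝓟 = 𝓛 and Δ is the identity matrix, so each path consists of exactly one link. Under the BPR assumption, for every α ∈ [0,1], every equilibrium (x^H, x^A) with autonomous fraction α, and every baseline equilibrium x̃ (α = 0): S(x^H + x^A) ≤ S(x̃). -/
open scoped BigOperators

private lemma bern_aux {n : ℝ} (hn : 1 ≤ n) {F G : ℝ} (hF : 0 < F) (hG : 0 ≤ G) :
    F ^ (n+1) + (n+1) * F ^ n * (G - F) ≤ G ^ (n+1) := by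
  have hs : (-1:ℝ) ≤ G / F - 1 := by
    have : 0 ≤ G / F := div_nonneg hG hF.le
    linarith
  have hp : (1:ℝ) ≤ n + 1 := by linarith
  have h := one_add_mul_self_le_rpow_one_add hs hp
  rw [add_sub_cancel] at h
  have hdiv : (G / F) ^ (n+1) = G ^ (n+1) / F ^ (n+1) := Real.div_rpow hG hF.le _
  rw [hdiv] at h
  have hFp : (0:ℝ) < F ^ (n+1) := Real.rpow_pos_of_pos hF _
  have h2 := mul_le_mul_of_nonneg_left h hFp.le
  have hFn : F ^ (n+1) = F ^ n * F := by
    rw [Real.rpow_add hF, Real.rpow_one]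
  rw [mul_div_cancel₀ _ hFp.ne'] at h2
  have : F ^ (n+1) * (1 + (n+1) * (G/F - 1)) = F ^ (n+1) + (n+1) * F ^ n * (G - F) := by
    field_simp
    rw [hFn]
    ring
  linarith [this ▸ h2]

/-- Lemma 5 (parallel links): in a network of parallel links (`𝓟 = 𝓛`, `Δ` the
identity matrix), under the BPR assumption, the social cost at any mixed-autonomy
equilibrium does not exceed the social cost at any baseline equilibrium. -/
theorem parallel_links_improvement {L : Type*} [Fintype L] [Nonempty L] [DecidableEq L]
    (t : L → ℝ → ℝ) (n : ℝ) (k b : L → ℝ) (hBPR : IsBPR t n k b)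
    (α : ℝ) (hα : α ∈ Set.Icc (0:ℝ) 1)
    (xH xA : L → ℝ)
    (heq : IsEquilibrium (fun a p : L => if a = p then (1:ℝ) else 0) t α xH xA)
    (xt : L → ℝ)
    (hxt : IsBaselineEquilibrium (fun a p : L => if a = p then (1:ℝ) else 0) t xt) :
    Scost t (fun a => xH a + xA a) ≤ Scost t xt := by
  obtain ⟨hn, hk, hb, ht⟩ := hBPR
  obtain ⟨hxH0, hxA0, hsH, hsA, lamH, lamA, hlam⟩ := heq
  obtain ⟨hxt0, hxts, lam, hlamt⟩ := hxt
  have hn0 : (0:ℝ) < n := lt_of_lt_of_le one_pos hn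
  -- identity matrix simplifications
  have hagg : ∀ x : L → ℝ, aggFlow (fun a p : L => if a = p then (1:ℝ) else 0) x = x := by
    intro x; funext a
    simp [aggFlow, ite_mul, Finset.sum_ite_eq]
  have hCH : ∀ (g : L → ℝ) (p : L),
      CH (fun a p : L => if a = p then (1:ℝ) else 0) t g p = t p (g p) := by
    intro g p
    simp [CH, ite_mul, Finset.sum_ite_eq']
  have hCA : ∀ (g : L → ℝ) (p : L),
      CA (fun a p : L => if a = p then (1:ℝ) else 0) t g p
        = t p (g p) + g p * deriv (t p) (g p) := by
    intro g p
    simp [CA, ite_mul, Finset.sum_ite_eq']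
  simp only [hagg, hCH, hCA] at hlam hlamt
  have hf0 : ∀ a, 0 ≤ xH a + xA a := fun a => add_nonneg (hxH0 a) (hxA0 a)
  have hHle : ∀ a, lamH ≤ t a (xH a + xA a) := fun a => (hlam a).1.1
  have hHeq : ∀ a, 0 < xH a → t a (xH a + xA a) = lamH := fun a => (hlam a).1.2
  have hAle : ∀ a, lamA ≤ t a (xH a + xA a)
      + (xH a + xA a) * deriv (t a) (xH a + xA a) := fun a => (hlam a).2.1
  have hAeq : ∀ a, 0 < xA a → t a (xH a + xA a)
      + (xH a + xA a) * deriv (t a) (xH a + xA a) = lamA := fun a => (hlam a).2.2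
  have hBle : ∀ a, lam ≤ t a (xt a) := fun a => (hlamt a).1
  have hBeq : ∀ a, 0 < xt a → t a (xt a) = lam := fun a => (hlamt a).2
  -- monotonicity of the latency functions
  have hmono : ∀ (a : L) {z w : ℝ}, 0 ≤ z → z ≤ w → t a z ≤ t a w := by
    intro a z w hz hzw
    rw [ht a z hz, ht a w (hz.trans hzw)]
    have h := Real.rpow_le_rpow hz hzw hn0.le
    nlinarith [(hk a).le]
  have hsmono : ∀ (a : L) {z w : ℝ}, 0 ≤ z → z < w → t a z < t a w := by
    intro a z w hz hzw
    rw [ht a z hz, ht a w (hz.trans hzw.le)]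
    have h := Real.rpow_lt_rpow hz hzw hn0
    nlinarith [hk a]
  -- Step 1: λH ≤ λ
  have hex : ∃ d, 0 < xt d ∧ xH d + xA d ≤ xt d := by
    by_contra h
    push_neg at h
    have hlt : ∑ a, xt a < ∑ a, (xH a + xA a) := by
      apply Finset.sum_lt_sum
      · intro i _
        rcases lt_or_eq_of_le (hxt0 i) with hi | hi
        · exact (h i hi).le
        · rw [← hi]; exact hf0 i
      · obtain ⟨i, hi⟩ : ∃ i, 0 < xt i := by
          by_contra hc; push_neg at hc
          have h0 : ∑ a, xt a = 0 :=
            Finset.sum_eq_zero fun a _ => le_antisymm (hc a) (hxt0 a)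
          rw [hxts] at h0; norm_num at h0
        exact ⟨i, Finset.mem_univ i, h i hi⟩
    rw [hxts, Finset.sum_add_distrib, hsH, hsA] at hlt
    linarith
  obtain ⟨d, hd0, hdle⟩ := hex
  have hHlam : lamH ≤ lam :=
    calc lamH ≤ t d (xH d + xA d) := hHle d
    _ ≤ t d (xt d) := hmono d (hf0 d) hdle
    _ = lam := hBeq d hd0
  -- Step 2: xH ≤ xt componentwise
  have hxHle : ∀ a, xH a ≤ xt a := by
    intro a; by_contra hc; push_neg at hc
    have hxa : 0 < xH a := lt_of_le_of_lt (hxt0 a) hc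
    have h1 : t a (xH a + xA a) = lamH := hHeq a hxa
    have h2 : t a (xt a) < t a (xH a + xA a) :=
      hsmono a (hxt0 a) (by nlinarith [hxA0 a])
    have h3 : lam ≤ t a (xt a) := hBle a
    linarith
  -- Step 3: per-link convexity inequality
  have key : ∀ a, (xH a + xA a) * t a (xH a + xA a)
      + (t a (xH a + xA a) + (xH a + xA a) * deriv (t a) (xH a + xA a))
        * (xt a - (xH a + xA a))
      ≤ xt a * t a (xt a) := by
    intro a
    have hF0 : 0 ≤ xH a + xA a := hf0 a
    have hG0 : 0 ≤ xt a := hxt0 a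
    rcases eq_or_lt_of_le hF0 with hF | hF
    · -- f a = 0
      rw [← hF]
      rw [ht a 0 le_rfl, ht a (xt a) hG0, Real.zero_rpow hn0.ne']
      have hGn : 0 ≤ xt a ^ n := Real.rpow_nonneg hG0 n
      nlinarith [mul_nonneg (mul_nonneg (hk a).le hGn) hG0]
    · -- 0 < f a
      set F := xH a + xA a with hFdef
      set G := xt a with hGdef
      have hder : deriv (t a) F = k a * (n * F ^ (n-1)) := by
        have hev : t a =ᶠ[nhds F] fun z => k a * z ^ n + b a := by
          filter_upwards [lt_mem_nhds hF] with z hz using ht a z hz.le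
        rw [hev.deriv_eq]
        exact (((Real.hasDerivAt_rpow_const (Or.inl hF.ne')).const_mul (k a)).add_const
          (b a)).deriv
      rw [ht a F hF0, ht a G hG0, hder]
      have hB := bern_aux hn hF hG0
      have hkB := mul_le_mul_of_nonneg_left hB (hk a).le
      have hFn1 : F ^ (n+1) = F ^ n * F := by
        rw [Real.rpow_add hF, Real.rpow_one]
      have hFnm : F ^ (n-1) * F = F ^ n := by
        rw [← Real.rpow_add_one hF.ne' (n-1), sub_add_cancel]
      have hGn1 : G ^ (n+1) = G ^ n * G := by
        rcases eq_or_lt_of_le hG0 with hG | hG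
        · rw [← hG, Real.zero_rpow (by linarith : n + 1 ≠ 0),
            Real.zero_rpow hn0.ne', mul_zero]
        · rw [Real.rpow_add hG, Real.rpow_one]
      rw [hFn1, hGn1] at hkB
      have hexp : F * (k a * (n * F ^ (n - 1))) = k a * (n * F ^ n) := by
        rw [← hFnm]; ring
      rw [hexp]
      nlinarith [hkB]
  -- Step 4: sum up
  have hsum : Scost t (fun a => xH a + xA a)
      + ∑ a, (t a (xH a + xA a)
          + (xH a + xA a) * deriv (t a) (xH a + xA a)) * (xt a - (xH a + xA a))
      ≤ Scost t xt := by
    rw [Scost, Scost, ← Finset.sum_add_distrib]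
    exact Finset.sum_le_sum fun a _ => key a
  have hsplit : ∑ a, (t a (xH a + xA a)
          + (xH a + xA a) * deriv (t a) (xH a + xA a)) * (xt a - (xH a + xA a))
      = ∑ a, (t a (xH a + xA a)
          + (xH a + xA a) * deriv (t a) (xH a + xA a)) * (xt a - xH a)
        - ∑ a, (t a (xH a + xA a)
          + (xH a + xA a) * deriv (t a) (xH a + xA a)) * xA a := by
    rw [← Finset.sum_sub_distrib]
    exact Finset.sum_congr rfl fun a _ => by ring
  have h1 : lamA * α ≤ ∑ a, (t a (xH a + xA a)
      + (xH a + xA a) * deriv (t a) (xH a + xA a)) * (xt a - xH a) := by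
    calc lamA * α = ∑ a, lamA * (xt a - xH a) := by
          rw [← Finset.mul_sum, Finset.sum_sub_distrib, hxts, hsH]; ring
    _ ≤ _ := Finset.sum_le_sum fun a _ =>
        mul_le_mul_of_nonneg_right (hAle a) (sub_nonneg.2 (hxHle a))
  have h2 : ∑ a, (t a (xH a + xA a)
      + (xH a + xA a) * deriv (t a) (xH a + xA a)) * xA a = lamA * α := by
    rw [← hsA, Finset.mul_sum]
    apply Finset.sum_congr rfl
    intro a _
    rcases lt_or_eq_of_le (hxA0 a) with h | h
    · rw [hAeq a h]
    · rw [← h]; ring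
  linarith
end

section
/- Suppose the network is a path multigraph: there is N ≥ 1 and nonempty finite link sets 𝓛_1, …, 𝓛_N with 𝓛 the disjoint union of the 𝓛_i, the path set is 𝓟 = 𝓛_1 × ⋯ × 𝓛_N, and for a link a ∈ 𝓛_i and path p = (p_1, …, p_N) one has Δ_{ap} = 1 if and only if p_i = a. Under the BPR assumption, for every α ∈ [0,1], every equilibrium (x^H, x^A) with autonomous fraction α, and every baseline equilibrium x̃ (α = 0): S(Δ(x^H + x^A)) ≤ S(Δx̃), with strict inequality whenever Δ(x^H + x^A) ≠ Δx̃. -/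
open scoped BigOperators

/-!
Each stage of a path multigraph is a parallel network carrying the whole unit demand, and since a
path is a free choice of one link per stage, at an equilibrium every used link is cheapest in its
stage for the class using it. The link social cost `z ↦ z t(z)` of a BPR link is strictly convex
with derivative the marginal cost `m`, so stage by stage it suffices that `∑ m(x) (y - x) ≥ 0` for
the mixed flow `x` and the baseline flow `y`. A link losing flow from `x` to `y` cannot be
human-cheapest at `x`, for then every link would lose flow; hence all such links carry the minimal
marginal cost `μ` of the stage, and `∑ m(x) (y - x) ≥ μ ∑ (y - x) = 0`.
-/

open Finset Set

theorem StrictConvexOn.mul_sub_lt_sub_of_hasDerivAt {S : Set ℝ} {f : ℝ → ℝ} {x y f' : ℝ}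
    (hf : StrictConvexOn ℝ S f) (hx : x ∈ S) (hy : y ∈ S) (hxy : x ≠ y)
    (hf' : HasDerivAt f f' x) : f' * (y - x) < f y - f x := by
  rcases hxy.lt_or_gt with hlt | hgt
  · have := hf.lt_slope_of_hasDerivAt hx hy hlt hf'
    rwa [slope_def_field, lt_div_iff₀ (sub_pos.2 hlt)] at this
  · have := hf.slope_lt_of_hasDerivAt hy hx hgt hf'
    rw [slope_def_field, div_lt_iff₀ (sub_pos.2 hgt)] at this
    linarith

/-- The summand of `CA`, so that `CA Δ t f p = ∑ a, Δ a p * marginalCost (t a) (f a)`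
holds by definition. -/
noncomputable def marginalCost (t : ℝ → ℝ) (z : ℝ) : ℝ := t z + z * deriv t z

section BPRLink

variable {t : ℝ → ℝ} {n k b : ℝ}

theorem strictMonoOn_of_bpr (hn : 0 < n) (hk : 0 < k) (ht : ∀ z, 0 ≤ z → t z = k * z ^ n + b) :
    StrictMonoOn t (Ici 0) := by
  intro u hu v hv huv
  rw [ht u hu, ht v hv]
  gcongr

theorem marginalCost_of_bpr (hn : n ≠ 0) (ht : ∀ z, 0 ≤ z → t z = k * z ^ n + b) {x : ℝ}
    (hx : 0 ≤ x) : marginalCost t x = (n + 1) * k * x ^ n + b := by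
  rcases hx.eq_or_lt with rfl | hx
  · simp [marginalCost, ht 0 le_rfl, Real.zero_rpow hn]
  have hderiv : HasDerivAt t (k * (n * x ^ (n - 1))) x := by
    refine (((Real.hasDerivAt_rpow_const (Or.inl hx.ne')).const_mul k).add_const b)
      |>.congr_of_eventuallyEq ?_
    filter_upwards [Ioi_mem_nhds hx] with z hz using ht z (le_of_lt hz)
  have hpow : x * x ^ (n - 1) = x ^ n := by
    rw [← Real.rpow_one_add' hx.le (by simpa using hn)]; ring_nf
  rw [marginalCost, hderiv.deriv, ht x hx.le]
  linear_combination k * n * hpow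

theorem marginalCost_mul_sub_lt_of_bpr (hn : 0 < n) (hk : 0 < k)
    (ht : ∀ z, 0 ≤ z → t z = k * z ^ n + b) {x y : ℝ} (hx : 0 ≤ x) (hy : 0 ≤ y) (hxy : x ≠ y) :
    marginalCost t x * (y - x) < y * t y - x * t x := by
  have hconv : StrictConvexOn ℝ (Ici 0) fun z : ℝ => z ^ (n + 1) :=
    strictConvexOn_rpow (by linarith)
  have hderiv : HasDerivAt (fun z : ℝ => z ^ (n + 1)) ((n + 1) * x ^ n) x := by
    simpa using Real.hasDerivAt_rpow_const (x := x) (p := n + 1) (Or.inr (by linarith))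
  have htan := hconv.mul_sub_lt_sub_of_hasDerivAt hx hy hxy hderiv
  have hsucc : ∀ z : ℝ, 0 ≤ z → z ^ (n + 1) = z * z ^ n := fun z hz => by
    rw [Real.rpow_add_one' hz (by linarith), mul_comm]
  rw [hsucc x hx, hsucc y hy] at htan
  rw [marginalCost_of_bpr hn.ne' ht hx, ht x hx, ht y hy]
  linarith [mul_lt_mul_of_pos_left htan hk]

end BPRLink

section Stage

variable {ι : Type*} [Fintype ι] {c m : ι → ℝ → ℝ} {x y : ι → ℝ}

theorem sum_mul_sub_nonneg_of_minimal (hc : ∀ a, StrictMonoOn (c a) (Ici 0))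
    (hx : ∀ a, 0 ≤ x a) (hy : ∀ a, 0 ≤ y a) (hsum : ∑ a, x a = ∑ a, y a)
    (hxmin : ∀ a, 0 < x a → (∀ a', c a (x a) ≤ c a' (x a')) ∨ ∀ a', m a (x a) ≤ m a' (x a'))
    (hymin : ∀ a, 0 < y a → ∀ a', c a (y a) ≤ c a' (y a')) :
    0 ≤ ∑ a, m a (x a) * (y a - x a) := by
  by_cases hloss : ∃ a₀, y a₀ < x a₀
  · obtain ⟨a₀, ha₀⟩ := hloss
    have hmarg : ∀ a, y a < x a → ∀ a', m a (x a) ≤ m a' (x a') := by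
      intro a ha
      refine (hxmin a ((hy a).trans_lt ha)).resolve_left fun hcmin => ?_
      have hle : ∀ a', y a' ≤ x a' := by
        intro a'
        rcases (hy a').eq_or_lt with h0 | hpos
        · exact h0 ▸ hx a'
        have hcost : c a' (y a') < c a' (x a') := calc
          c a' (y a') ≤ c a (y a) := hymin a' hpos a
          _ < c a (x a) := hc a (hy a) (hx a) ha
          _ ≤ c a' (x a') := hcmin a'
        exact ((hc a').lt_iff_lt (hy a') (hx a')).1 hcost |>.le
      have := sum_lt_sum (fun a' _ => hle a') ⟨a, mem_univ a, ha⟩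
      linarith
    calc 0 = ∑ a, m a₀ (x a₀) * (y a - x a) := by
          rw [← mul_sum, sum_sub_distrib, hsum, sub_self, mul_zero]
      _ ≤ ∑ a, m a (x a) * (y a - x a) := by
          refine sum_le_sum fun a _ => ?_
          rcases le_or_gt (x a) (y a) with hgain | hloss
          · exact mul_le_mul_of_nonneg_right (hmarg a₀ ha₀ a) (sub_nonneg.2 hgain)
          · rw [le_antisymm (hmarg a hloss a₀) (hmarg a₀ ha₀ a)]
  · simp only [not_exists, not_lt] at hloss
    have heq := (sum_eq_sum_iff_of_le fun a _ => hloss a).1 hsum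
    simp [heq]

theorem Scost_lt_of_mul_sub_lt
    (htan : ∀ a u v, 0 ≤ u → 0 ≤ v → u ≠ v → m a u * (v - u) < v * c a v - u * c a u)
    (hx : ∀ a, 0 ≤ x a) (hy : ∀ a, 0 ≤ y a) (hvi : 0 ≤ ∑ a, m a (x a) * (y a - x a))
    (hxy : x ≠ y) : Scost c x < Scost c y := by
  obtain ⟨a₀, ha₀⟩ := Function.ne_iff.1 hxy
  have hterm : ∀ a, m a (x a) * (y a - x a) ≤ y a * c a (y a) - x a * c a (x a) := by
    intro a
    rcases eq_or_ne (x a) (y a) with h | h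
    · simp [h]
    · exact (htan a _ _ (hx a) (hy a) h).le
  have := sum_lt_sum (fun a _ => hterm a) ⟨a₀, mem_univ a₀, htan a₀ _ _ (hx a₀) (hy a₀) ha₀⟩
  rw [sum_sub_distrib] at this
  unfold Scost
  linarith

end Stage

section Sigma

variable {ι : Type*} [Fintype ι] {Li : ι → Type*} [∀ i, Fintype (Li i)]

theorem Scost_sigma (t : (Σ i, Li i) → ℝ → ℝ) (f : (Σ i, Li i) → ℝ) :
    Scost t f = ∑ i, Scost (fun a => t ⟨i, a⟩) (fun a => f ⟨i, a⟩) :=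
  Fintype.sum_sigma _

theorem Scost_lt_of_forall_stage {t : (Σ i, Li i) → ℝ → ℝ} {f g : (Σ i, Li i) → ℝ}
    (hstage : ∀ i, (fun a => f ⟨i, a⟩) ≠ (fun a => g ⟨i, a⟩) →
      Scost (fun a => t ⟨i, a⟩) (fun a => f ⟨i, a⟩) <
        Scost (fun a => t ⟨i, a⟩) (fun a => g ⟨i, a⟩))
    (hfg : f ≠ g) : Scost t f < Scost t g := by
  obtain ⟨⟨i, a⟩, ha⟩ := Function.ne_iff.1 hfg
  rw [Scost_sigma, Scost_sigma]
  refine sum_lt_sum (fun j _ => ?_) ⟨i, mem_univ i, hstage i fun h => ha (congrFun h a)⟩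
  rcases eq_or_ne (fun a => f ⟨j, a⟩) (fun a => g ⟨j, a⟩) with h | h
  · rw [h]
  · exact (hstage j h).le

end Sigma

section PathMultigraph

variable {ι : Type*} [Fintype ι] {Li : ι → Type*} [∀ i, Fintype (Li i)]
  [∀ i, DecidableEq (Li i)]

variable (Li) in
def pathIncidence : (Σ i, Li i) → (∀ i, Li i) → ℝ := fun a p => if p a.1 = a.2 then 1 else 0

theorem sum_pathIncidence_mul (c : (Σ i, Li i) → ℝ) (p : ∀ i, Li i) :
    ∑ a, pathIncidence Li a p * c a = ∑ i, c ⟨i, p i⟩ := by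
  simp [Fintype.sum_sigma, pathIncidence]

variable [DecidableEq ι]

theorem aggFlow_pathIncidence (z : (∀ i, Li i) → ℝ) (a : Σ i, Li i) :
    aggFlow (pathIncidence Li) z a = ∑ p with p a.1 = a.2, z p := by
  simp [aggFlow, pathIncidence, sum_filter]

theorem aggFlow_pathIncidence_nonneg {z : (∀ i, Li i) → ℝ} (hz : ∀ p, 0 ≤ z p)
    (a : Σ i, Li i) : 0 ≤ aggFlow (pathIncidence Li) z a := by
  rw [aggFlow_pathIncidence]
  exact sum_nonneg fun p _ => hz p

theorem sum_aggFlow_pathIncidence (z : (∀ i, Li i) → ℝ) (i : ι) :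
    ∑ a : Li i, aggFlow (pathIncidence Li) z ⟨i, a⟩ = ∑ p, z p := by
  simp only [aggFlow_pathIncidence]
  exact sum_fiberwise univ (fun p => p i) z

theorem exists_pos_of_aggFlow_pathIncidence_pos {z : (∀ i, Li i) → ℝ} {i : ι} {a : Li i}
    (ha : 0 < aggFlow (pathIncidence Li) z ⟨i, a⟩) : ∃ p, p i = a ∧ 0 < z p := by
  rw [aggFlow_pathIncidence] at ha
  obtain ⟨p, hp, hzp⟩ := exists_lt_of_sum_lt (sum_const_zero.trans_lt ha)
  exact ⟨p, (mem_filter.1 hp).2, hzp⟩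

theorem le_of_forall_pathCost_le {c : (Σ i, Li i) → ℝ} {p : ∀ i, Li i}
    (hp : ∀ q, ∑ a, pathIncidence Li a p * c a ≤ ∑ a, pathIncidence Li a q * c a)
    (i : ι) (a' : Li i) : c ⟨i, p i⟩ ≤ c ⟨i, a'⟩ := by
  have hswap := hp (Function.update p i a')
  simp only [sum_pathIncidence_mul] at hswap
  have hold : ∑ j, c ⟨j, p j⟩ = c ⟨i, p i⟩ + ∑ j ∈ univ \ {i}, c ⟨j, p j⟩ := by
    rw [← sum_update_of_mem (mem_univ i), Function.update_eq_self]
  have hnew :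
      ∑ j, c ⟨j, Function.update p i a' j⟩ = c ⟨i, a'⟩ + ∑ j ∈ univ \ {i}, c ⟨j, p j⟩ := by
    rw [← sum_update_of_mem (mem_univ i)]
    exact sum_congr rfl fun j _ => Function.apply_update (fun j b => c ⟨j, b⟩) p i a' j
  linarith

variable {t : (Σ i, Li i) → ℝ → ℝ}

theorem IsEquilibrium.minimal_of_aggFlow_pos {α : ℝ} {xH xA : (∀ i, Li i) → ℝ}
    (h : IsEquilibrium (pathIncidence Li) t α xH xA) {i : ι} {a : Li i}
    (ha : 0 < aggFlow (pathIncidence Li) (fun r => xH r + xA r) ⟨i, a⟩) :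
    (∀ a', t ⟨i, a⟩ (aggFlow (pathIncidence Li) (fun r => xH r + xA r) ⟨i, a⟩) ≤
        t ⟨i, a'⟩ (aggFlow (pathIncidence Li) (fun r => xH r + xA r) ⟨i, a'⟩)) ∨
      ∀ a', marginalCost (t ⟨i, a⟩) (aggFlow (pathIncidence Li) (fun r => xH r + xA r) ⟨i, a⟩) ≤
        marginalCost (t ⟨i, a'⟩) (aggFlow (pathIncidence Li) (fun r => xH r + xA r) ⟨i, a'⟩) := by
  obtain ⟨-, -, -, -, lamH, lamA, hwardrop⟩ := h
  obtain ⟨p, rfl, hp⟩ := exists_pos_of_aggFlow_pathIncidence_pos ha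
  rcases lt_or_ge 0 (xH p) with hHp | hHp
  · exact .inl <| le_of_forall_pathCost_le (fun q => (hwardrop p).1.2 hHp ▸ (hwardrop q).1.1) i
  · have hAp : 0 < xA p := by linarith
    exact .inr <| le_of_forall_pathCost_le (fun q => (hwardrop p).2.2 hAp ▸ (hwardrop q).2.1) i

theorem IsBaselineEquilibrium.minimal_of_aggFlow_pos {xt : (∀ i, Li i) → ℝ}
    (h : IsBaselineEquilibrium (pathIncidence Li) t xt) {i : ι} {a : Li i}
    (ha : 0 < aggFlow (pathIncidence Li) xt ⟨i, a⟩) (a' : Li i) :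
    t ⟨i, a⟩ (aggFlow (pathIncidence Li) xt ⟨i, a⟩) ≤
      t ⟨i, a'⟩ (aggFlow (pathIncidence Li) xt ⟨i, a'⟩) := by
  obtain ⟨-, -, lam, hwardrop⟩ := h
  obtain ⟨p, rfl, hp⟩ := exists_pos_of_aggFlow_pathIncidence_pos ha
  exact le_of_forall_pathCost_le (fun q => (hwardrop p).2 hp ▸ (hwardrop q).1) i a'

end PathMultigraph

theorem path_multigraph_improvement_general (N : ℕ)
    (Li : Fin N → Type*) [∀ i, Fintype (Li i)]
    [∀ i, DecidableEq (Li i)]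
    (t : (Σ i : Fin N, Li i) → ℝ → ℝ)
    (Δ : (Σ i : Fin N, Li i) → (∀ i : Fin N, Li i) → ℝ)
    (hΔ : ∀ (a : Σ i : Fin N, Li i) (p : ∀ i : Fin N, Li i),
      Δ a p = if p a.1 = a.2 then 1 else 0)
    (n : ℝ) (k b : (Σ i : Fin N, Li i) → ℝ) (hBPR : IsBPR t n k b)
    (α : ℝ)
    (xH xA : (∀ i : Fin N, Li i) → ℝ) (heq : IsEquilibrium Δ t α xH xA)
    (xt : (∀ i : Fin N, Li i) → ℝ) (hxt : IsBaselineEquilibrium Δ t xt) :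
    Scost t (aggFlow Δ (fun r => xH r + xA r)) ≤ Scost t (aggFlow Δ xt) ∧
    (aggFlow Δ (fun r => xH r + xA r) ≠ aggFlow Δ xt →
      Scost t (aggFlow Δ (fun r => xH r + xA r)) < Scost t (aggFlow Δ xt)) := by
  obtain rfl : Δ = pathIncidence Li := funext₂ hΔ
  obtain ⟨hn, hk, -, ht⟩ := hBPR
  have hn0 : 0 < n := by linarith
  have ⟨hH, hA, hHsum, hAsum, _⟩ := heq
  set F := aggFlow (pathIncidence Li) (fun r => xH r + xA r)
  set G := aggFlow (pathIncidence Li) xt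
  have hF : ∀ s, 0 ≤ F s := aggFlow_pathIncidence_nonneg fun r => add_nonneg (hH r) (hA r)
  have hG : ∀ s, 0 ≤ G s := aggFlow_pathIncidence_nonneg hxt.1
  have hdemand (i : Fin N) : ∑ a : Li i, F ⟨i, a⟩ = ∑ a : Li i, G ⟨i, a⟩ := by
    rw [sum_aggFlow_pathIncidence, sum_aggFlow_pathIncidence, sum_add_distrib, hHsum, hAsum,
      hxt.2.1, sub_add_cancel]
  have hlt : F ≠ G → Scost t F < Scost t G := by
    refine Scost_lt_of_forall_stage fun i hi => ?_
    refine Scost_lt_of_mul_sub_lt (m := fun a => marginalCost (t ⟨i, a⟩))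
      (fun a _ _ => marginalCost_mul_sub_lt_of_bpr hn0 (hk _) (ht _)) (fun a => hF _)
      (fun a => hG _) ?_ hi
    exact sum_mul_sub_nonneg_of_minimal (fun a => strictMonoOn_of_bpr hn0 (hk _) (ht _))
      (fun a => hF _) (fun a => hG _) (hdemand i) (fun a ha => heq.minimal_of_aggFlow_pos ha)
      (fun a ha => hxt.minimal_of_aggFlow_pos ha)
  exact ⟨(eq_or_ne F G).elim (fun h => h ▸ le_rfl) fun h => (hlt h).le, hlt⟩

/-- Improvement on path multigraphs: the network's links decompose as the
disjoint union of nonempty stages `𝓛_1, …, 𝓛_N` (`N ≥ 1`), the paths are exactly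
the tuples choosing one link per stage, and a link belongs to a path iff the path
chooses it at its stage. Under the BPR assumption, the social cost at any
mixed-autonomy equilibrium does not exceed the social cost at any baseline
equilibrium, strictly so whenever the aggregated link flows differ. -/
theorem path_multigraph_improvement (N : ℕ) (hN : 1 ≤ N)
    (Li : Fin N → Type*) [∀ i, Fintype (Li i)] [∀ i, Nonempty (Li i)]
    [∀ i, DecidableEq (Li i)]
    (t : (Σ i : Fin N, Li i) → ℝ → ℝ)
    (Δ : (Σ i : Fin N, Li i) → (∀ i : Fin N, Li i) → ℝ)
    (hΔ : ∀ (a : Σ i : Fin N, Li i) (p : ∀ i : Fin N, Li i),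
      Δ a p = if p a.1 = a.2 then 1 else 0)
    (n : ℝ) (k b : (Σ i : Fin N, Li i) → ℝ) (hBPR : IsBPR t n k b)
    (α : ℝ) (hα : α ∈ Set.Icc (0:ℝ) 1)
    (xH xA : (∀ i : Fin N, Li i) → ℝ) (heq : IsEquilibrium Δ t α xH xA)
    (xt : (∀ i : Fin N, Li i) → ℝ) (hxt : IsBaselineEquilibrium Δ t xt) :
    Scost t (aggFlow Δ (fun r => xH r + xA r)) ≤ Scost t (aggFlow Δ xt) ∧
    (aggFlow Δ (fun r => xH r + xA r) ≠ aggFlow Δ xt →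
      Scost t (aggFlow Δ (fun r => xH r + xA r)) < Scost t (aggFlow Δ xt)) :=
  path_multigraph_improvement_general N Li t Δ hΔ n k b hBPR α xH xA heq xt hxt
end

section
/- Assume each t_a is continuously differentiable and nondecreasing on [0,∞), and let (f^{H*}, f^{A*}) ∈ K and (f^{H†}, f^{A†}) ∈ K both satisfy the equilibrium variational inequality (with the same α ∈ [0,1]). Write f* = f^{H*} + f^{A*} and f† = f^{H†} + f^{A†}. Then Σ_a (t_a(f*_a) − t_a(f†_a)) (f^{H†}_a − f^{H*}_a) ≥ 0. -/
open scoped BigOperators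

/-- Membership in the set `K` of induced link flow pairs for fraction `α`. -/
def InK {L P : Type*} [Fintype P] (Δ : L → P → ℝ) (α : ℝ) (fH fA : L → ℝ) : Prop :=
  ∃ xH xA : P → ℝ, (∀ p, 0 ≤ xH p) ∧ (∀ p, 0 ≤ xA p) ∧
    (∑ p, xH p = 1 - α) ∧ (∑ p, xA p = α) ∧
    aggFlow Δ xH = fH ∧ aggFlow Δ xA = fA

/-- The equilibrium variational inequality for a pair `(f^H, f^A) ∈ K`. -/
def SatisfiesVI {L P : Type*} [Fintype L] [Fintype P] (Δ : L → P → ℝ)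
    (t : L → ℝ → ℝ) (α : ℝ) (fHs fAs : L → ℝ) : Prop :=
  InK Δ α fHs fAs ∧
  ∀ fH fA : L → ℝ, InK Δ α fH fA →
    0 ≤ (∑ a, t a (fHs a + fAs a) * (fH a - fHs a)) +
        ∑ a, (t a (fHs a + fAs a) +
          (fHs a + fAs a) * deriv (t a) (fHs a + fAs a)) * (fA a - fAs a)

/-- Cross-monotonicity step in the uniqueness proof: if `(f^{H*}, f^{A*})` and
`(f^{H†}, f^{A†})` both satisfy the equilibrium variational inequality (with the
same `α`), then `Σ_a (t_a(f*_a) − t_a(f†_a))(f^{H†}_a − f^{H*}_a) ≥ 0`. -/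
theorem vi_cross_inequality {L P : Type*} [Fintype L] [Fintype P] [Nonempty P]
    (Δ : L → P → ℝ) (hΔ : ∀ a p, Δ a p = 0 ∨ Δ a p = 1)
    (t : L → ℝ → ℝ) (ht : ∀ a, ContDiff ℝ 1 (t a))
    (htmono : ∀ a, MonotoneOn (t a) (Set.Ici (0:ℝ)))
    (α : ℝ) (hα : α ∈ Set.Icc (0:ℝ) 1)
    (fHs fAs fHd fAd : L → ℝ)
    (hstar : SatisfiesVI Δ t α fHs fAs) (hdag : SatisfiesVI Δ t α fHd fAd) :
    0 ≤ ∑ a, (t a (fHs a + fAs a) - t a (fHd a + fAd a)) * (fHd a - fHs a) := by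
  obtain ⟨⟨xHs, xAs, hxHs0, hxAs0, hxHsum, hxAsum, hxHagg, hxAagg⟩, hVIs⟩ := hstar
  obtain ⟨⟨xHd, xAd, hxHd0, hxAd0, hxHdsum, hxAdsum, hxHdagg, hxAdagg⟩, hVId⟩ := hdag
  have h1 := hVIs fHd fAs ⟨xHd, xAs, hxHd0, hxAs0, hxHdsum, hxAsum, hxHdagg, hxAagg⟩
  have h2 := hVId fHs fAd ⟨xHs, xAd, hxHs0, hxAd0, hxHsum, hxAdsum, hxHagg, hxAdagg⟩
  simp only [sub_self, mul_zero, Finset.sum_const_zero, add_zero] at h1 h2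
  have h3 : ∑ a, (t a (fHs a + fAs a) - t a (fHd a + fAd a)) * (fHd a - fHs a)
      = (∑ a, t a (fHs a + fAs a) * (fHd a - fHs a))
        + ∑ a, t a (fHd a + fAd a) * (fHs a - fHd a) := by
    rw [← Finset.sum_add_distrib]
    congr 1; ext a; ring
  rw [h3]
  exact add_nonneg h1 h2
end
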